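/- arXiv:2504.20787 — 2 statements merged into one kernel-verified Lean document; each statement's English description precedes it below -/
import Mathlib

section
/- Let G be a finite 2-group generated by elements a₁, a₂, a₃ satisfying a₁² ≡ [a₁,a₂], a₂² ≡ [a₂,a₃], and a₃² ≡ [a₁,a₃] modulo G₃, and suppose that x⁴ ∈ G'' for every x ∈ G'. Then G'' = G₄, the fourth term of the lower central series of G. -/
/-!
Every group satisfies `G'' ≤ G₄`: modulo `G₄` the three subgroups lemma makes `G'` abelian.
Conversely, as `G` is nilpotent it suffices that `G₄ ≤ G'' G₅`, i.e. that `Q₄ = 1` for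
`Q = G / G'' G₅`, a metabelian group of class at most `4` with `x⁴ = 1` on `Q'`. There
`g² ≡ u (mod Q₃)` gives `⁅⁅u, h⁆, k⁆ = ⁅⁅⁅g, h⁆, k⁆, k⁆ ⁅⁅⁅g, h⁆, g⁆, k⁆⁻¹` whenever `k² ∈ Q'`,
and `x⁴ = 1` gives `⁅⁅⁅g, h⁆, h⁆, h⁆ ⁅⁅⁅g, h⁆, g⁆, g⁆ = ⁅⁅⁅g, h⁆, g⁆, h⁆` when `g², h² ∈ Q'`.
Applied to the three congruences, these relations kill every weight-four commutator of the
generators, and those generate `Q₄` modulo `Q₅`.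
-/

open scoped commutatorElement

section LowerCentralSeries

variable {G H : Type*} [Group G] [Group H]

theorem Subgroup.map_top_lowerCentralSeries_of_surjective {f : G →* H}
    (hf : Function.Surjective f) (n : ℕ) :
    ((⊤ : Subgroup G).lowerCentralSeries n).map f = (⊤ : Subgroup H).lowerCentralSeries n := by
  rw [map_lowerCentralSeries, map_top_of_surjective f hf]

theorem QuotientGroup.top_lowerCentralSeries_eq_bot_iff (N : Subgroup G) [N.Normal] (n : ℕ) :
    (⊤ : Subgroup (G ⧸ N)).lowerCentralSeries n = ⊥ ↔
      (⊤ : Subgroup G).lowerCentralSeries n ≤ N := by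
  rw [← Subgroup.map_top_lowerCentralSeries_of_surjective (mk'_surjective N),
    Subgroup.map_eq_bot_iff, ker_mk']

theorem QuotientGroup.commutator_commutator_eq_bot_iff (N : Subgroup G) [N.Normal] :
    ⁅commutator (G ⧸ N), commutator (G ⧸ N)⁆ = ⊥ ↔ ⁅commutator G, commutator G⁆ ≤ N := by
  rw [← Subgroup.top_lowerCentralSeries_one,
    ← Subgroup.map_top_lowerCentralSeries_of_surjective (mk'_surjective N),
    ← Subgroup.map_commutator, Subgroup.map_eq_bot_iff, ker_mk']
  rfl

theorem commutator_commutator_eq_bot_of_top_lowerCentralSeries_three_eq_bot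
    (h : (⊤ : Subgroup G).lowerCentralSeries 3 = ⊥) : ⁅commutator G, commutator G⁆ = ⊥ := by
  change ⁅⁅(⊤ : Subgroup G), ⊤⁆, commutator G⁆ = ⊥
  refine Subgroup.commutator_commutator_eq_bot_of_rotate ?_ h
  rw [Subgroup.commutator_comm ⊤]
  exact h

theorem commutator_commutator_le_top_lowerCentralSeries_three :
    ⁅commutator G, commutator G⁆ ≤ (⊤ : Subgroup G).lowerCentralSeries 3 :=
  (QuotientGroup.commutator_commutator_eq_bot_iff _).mp <|
    commutator_commutator_eq_bot_of_top_lowerCentralSeries_three_eq_bot <|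
      (QuotientGroup.top_lowerCentralSeries_eq_bot_iff _ 3).mpr le_rfl

theorem Subgroup.top_lowerCentralSeries_eq_bot_of_le_succ [Group.IsNilpotent G] {n : ℕ}
    (h : (⊤ : Subgroup G).lowerCentralSeries n ≤ (⊤ : Subgroup G).lowerCentralSeries (n + 1)) :
    (⊤ : Subgroup G).lowerCentralSeries n = ⊥ := by
  have hle : ∀ m, (⊤ : Subgroup G).lowerCentralSeries n ≤
      (⊤ : Subgroup G).lowerCentralSeries (n + m) := by
    intro m
    induction m with
    | zero => exact le_rfl
    | succ m ih => exact h.trans (commutator_mono ih le_rfl)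
  obtain ⟨m, hm⟩ := nilpotent_iff_lowerCentralSeries.mp ‹Group.IsNilpotent G›
  rw [eq_bot_iff, ← hm]
  exact (hle m).trans (lowerCentralSeries_antitone _ (Nat.le_add_left m n))

theorem Subgroup.top_lowerCentralSeries_le_of_le_sup_succ [Group.IsNilpotent G] (N : Subgroup G)
    [N.Normal] {n : ℕ}
    (h : (⊤ : Subgroup G).lowerCentralSeries n ≤ N ⊔ (⊤ : Subgroup G).lowerCentralSeries (n + 1)) :
    (⊤ : Subgroup G).lowerCentralSeries n ≤ N := by
  rw [← QuotientGroup.top_lowerCentralSeries_eq_bot_iff]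
  apply top_lowerCentralSeries_eq_bot_of_le_succ
  have hN : N.map (QuotientGroup.mk' N) = ⊥ := (map_eq_bot_iff _).mpr (QuotientGroup.ker_mk' N).ge
  simpa only [← map_top_lowerCentralSeries_of_surjective (QuotientGroup.mk'_surjective N),
    map_sup, hN, bot_sup_eq] using map_mono (f := QuotientGroup.mk' N) h

end LowerCentralSeries

/-- Index `n` holds the commutators of weight `n + 1`, matching
`(⊤ : Subgroup G).lowerCentralSeries n`, which is `Gₙ₊₁`. -/
def leftNormedCommutators {G : Type*} [Group G] (S : Set G) : ℕ → Set G
  | 0 => S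
  | n + 1 => Set.image2 (fun x s => ⁅x, s⁆) (leftNormedCommutators S n) S

theorem image_leftNormedCommutators {G H : Type*} [Group G] [Group H] (f : G →* H) (S : Set G)
    (n : ℕ) : f '' leftNormedCommutators S n = leftNormedCommutators (f '' S) n := by
  induction n with
  | zero => rfl
  | succ n ih =>
    rw [leftNormedCommutators, leftNormedCommutators, ← ih]
    exact Set.image_image2_distrib (map_commutatorElement f)

/-- Induction on `n` through `G ⧸ center G`: the hypothesis makes the weight-`n` commutators of
generators central. -/
theorem Subgroup.top_lowerCentralSeries_eq_bot_of_leftNormedCommutators_subset {n : ℕ} :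
    ∀ {G : Type*} [Group G] {S : Set G}, closure S = ⊤ →
      (⊤ : Subgroup G).lowerCentralSeries (n + 1) = ⊥ → leftNormedCommutators S n ⊆ {1} →
      (⊤ : Subgroup G).lowerCentralSeries n = ⊥ := by
  induction n with
  | zero =>
    intro G _ S hS _ hL
    rw [lowerCentralSeries_zero, ← hS]
    exact closure_eq_bot_iff.mpr hL
  | succ n ih =>
    intro G _ S hS hclass hL
    have hcent : leftNormedCommutators S n ⊆ center G := by
      intro x hx
      rw [← centralizer_univ, ← coe_top, ← hS, centralizer_closure]
      intro s hs
      have : ⁅x, s⁆ = 1 := hL (Set.mem_image2_of_mem hx hs)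
      exact (commutatorElement_eq_one_iff_mul_comm.mp this).symm
    have hS' : closure (QuotientGroup.mk' (center G) '' S) = ⊤ := by
      rw [← MonoidHom.map_closure, hS, map_top_of_surjective _ (QuotientGroup.mk'_surjective _)]
    have hclass' := (QuotientGroup.top_lowerCentralSeries_eq_bot_iff (center G) (n + 1)).mpr
      (commutator_top_right_eq_bot_iff_le_center.mp hclass)
    have hL' : leftNormedCommutators (QuotientGroup.mk' (center G) '' S) n ⊆ {1} := by
      rintro _ hx
      rw [← image_leftNormedCommutators] at hx
      obtain ⟨x, hx, rfl⟩ := hx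
      exact (QuotientGroup.eq_one_iff x).mpr (hcent hx)
    exact commutator_top_right_eq_bot_iff_le_center.mpr
      ((QuotientGroup.top_lowerCentralSeries_eq_bot_iff _ n).mp (ih hS' hclass' hL'))

section Metabelian

variable {Q : Type*} [Group Q]

theorem commutatorElement_mem_commutator (g h : Q) : ⁅g, h⁆ ∈ commutator Q :=
  Subgroup.commutator_mem_commutator (Subgroup.mem_top g) (Subgroup.mem_top h)

theorem commutatorElement_sq_left (g h : Q) : ⁅g ^ 2, h⁆ = ⁅⁅g, h⁆, g⁆⁻¹ * ⁅g, h⁆ ^ 2 := by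
  simp only [commutatorElement_def, pow_two, mul_inv_rev, inv_inv, mul_assoc, mul_inv_cancel_left,
    inv_mul_cancel_left]

theorem commutatorElement_mul_left_of_mem_commutator
    (hmet : ∀ x ∈ commutator Q, ∀ y ∈ commutator Q, Commute x y) {x : Q} (hx : x ∈ commutator Q)
    (y g : Q) : ⁅x * y, g⁆ = ⁅x, g⁆ * ⁅y, g⁆ := by
  rw [commutatorElement_mul_left_eq_conj_mul,
    (hmet x hx _ (commutatorElement_mem_commutator y g)).eq, mul_inv_cancel_right,
    (hmet _ (commutatorElement_mem_commutator y g) _ (commutatorElement_mem_commutator x g)).eq]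

theorem commutatorElement_inv_left_of_mem_commutator
    (hmet : ∀ x ∈ commutator Q, ∀ y ∈ commutator Q, Commute x y) {x : Q} (hx : x ∈ commutator Q)
    (g : Q) : ⁅x⁻¹, g⁆ = ⁅x, g⁆⁻¹ := by
  refine eq_inv_of_mul_eq_one_left ?_
  rw [← commutatorElement_mul_left_of_mem_commutator hmet (inv_mem hx), inv_mul_cancel,
    commutatorElement_one_left]

theorem commutatorElement_pow_left_of_mem_commutator
    (hmet : ∀ x ∈ commutator Q, ∀ y ∈ commutator Q, Commute x y) {x : Q} (hx : x ∈ commutator Q)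
    (g : Q) (n : ℕ) : ⁅x ^ n, g⁆ = ⁅x, g⁆ ^ n := by
  induction n with
  | zero => simp
  | succ n ih =>
    rw [pow_succ', commutatorElement_mul_left_of_mem_commutator hmet hx, ih, pow_succ']

/-- Since `x` commutes with `k ^ 2`, conjugation by `k` inverts `⁅x, k⁆`. -/
theorem commutatorElement_commutatorElement_self_of_sq_mem
    (hmet : ∀ x ∈ commutator Q, ∀ y ∈ commutator Q, Commute x y) {x k : Q}
    (hx : x ∈ commutator Q) (hk : k ^ 2 ∈ commutator Q) : ⁅⁅x, k⁆, k⁆ = ⁅x, k⁆ ^ 2 := by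
  have hconj : k * ⁅x, k⁆ * k⁻¹ = ⁅x, k⁆⁻¹ := by
    have h := (hmet x hx _ hk).commutator_eq
    rw [pow_two, commutatorElement_mul_right_eq_mul_conj, mul_assoc, mul_assoc, ← mul_assoc k] at h
    exact eq_inv_of_mul_eq_one_right h
  calc ⁅⁅x, k⁆, k⁆ = ⁅x, k⁆ * (k * ⁅x, k⁆ * k⁻¹)⁻¹ := by
        simp only [commutatorElement_def, mul_inv_rev, inv_inv, mul_assoc]
    _ = ⁅x, k⁆ ^ 2 := by rw [hconj, inv_inv, pow_two]

theorem commutatorElement_commutatorElement_sq_left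
    (hmet : ∀ x ∈ commutator Q, ∀ y ∈ commutator Q, Commute x y) (g h : Q) {k : Q}
    (hk : k ^ 2 ∈ commutator Q) :
    ⁅⁅g ^ 2, h⁆, k⁆ = ⁅⁅⁅g, h⁆, k⁆, k⁆ * ⁅⁅⁅g, h⁆, g⁆, k⁆⁻¹ := by
  have hgh := commutatorElement_mem_commutator g h
  have hghg := commutatorElement_mem_commutator ⁅g, h⁆ g
  rw [commutatorElement_sq_left, commutatorElement_mul_left_of_mem_commutator hmet (inv_mem hghg),
    commutatorElement_inv_left_of_mem_commutator hmet hghg,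
    commutatorElement_pow_left_of_mem_commutator hmet hgh,
    ← commutatorElement_commutatorElement_self_of_sq_mem hmet hgh hk]
  exact (hmet _ (inv_mem (commutatorElement_mem_commutator _ _)) _
    (commutatorElement_mem_commutator _ _)).eq

theorem commutatorElement_commutatorElement_congr
    (hmet : ∀ x ∈ commutator Q, ∀ y ∈ commutator Q, Commute x y)
    (hγ : (⊤ : Subgroup Q).lowerCentralSeries 4 = ⊥) {y y' : Q}
    (hy : y * y'⁻¹ ∈ (⊤ : Subgroup Q).lowerCentralSeries 2) (h k : Q) :
    ⁅⁅y, h⁆, k⁆ = ⁅⁅y', h⁆, k⁆ := by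
  have ht : y * y'⁻¹ ∈ (⊤ : Subgroup Q).lowerCentralSeries 1 :=
    Subgroup.lowerCentralSeries_antitone _ (by norm_num) hy
  have hγ5 : ⁅⁅y * y'⁻¹, h⁆, k⁆ = 1 := by
    rw [← Subgroup.mem_bot, ← hγ]
    exact Subgroup.commutator_mem_commutator
      (Subgroup.commutator_mem_commutator hy (Subgroup.mem_top h)) (Subgroup.mem_top k)
  calc ⁅⁅y, h⁆, k⁆ = ⁅⁅y * y'⁻¹ * y', h⁆, k⁆ := by rw [inv_mul_cancel_right]
    _ = ⁅⁅y', h⁆, k⁆ := by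
      rw [commutatorElement_mul_left_of_mem_commutator hmet ht,
        commutatorElement_mul_left_of_mem_commutator hmet (commutatorElement_mem_commutator _ _),
        hγ5, one_mul]

theorem commutatorElement_commutatorElement_of_sq_mul_inv_mem
    (hmet : ∀ x ∈ commutator Q, ∀ y ∈ commutator Q, Commute x y)
    (hγ : (⊤ : Subgroup Q).lowerCentralSeries 4 = ⊥) {g u : Q}
    (hgu : g ^ 2 * u⁻¹ ∈ (⊤ : Subgroup Q).lowerCentralSeries 2) (h : Q) {k : Q}
    (hk : k ^ 2 ∈ commutator Q) :
    ⁅⁅u, h⁆, k⁆ = ⁅⁅⁅g, h⁆, k⁆, k⁆ * ⁅⁅⁅g, h⁆, g⁆, k⁆⁻¹ :=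
  (commutatorElement_commutatorElement_congr hmet hγ hgu h k).symm.trans
    (commutatorElement_commutatorElement_sq_left hmet g h hk)

theorem commutatorElement_weight_four_eq_of_sq_mem
    (hmet : ∀ x ∈ commutator Q, ∀ y ∈ commutator Q, Commute x y)
    (hexp : ∀ x ∈ commutator Q, x ^ 4 = 1) {g h : Q} (hg : g ^ 2 ∈ commutator Q)
    (hh : h ^ 2 ∈ commutator Q) :
    ⁅⁅⁅g, h⁆, h⁆, h⁆ * ⁅⁅⁅g, h⁆, g⁆, g⁆ = ⁅⁅⁅g, h⁆, g⁆, h⁆ := by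
  have hgh := commutatorElement_mem_commutator g h
  have hghg := commutatorElement_mem_commutator ⁅g, h⁆ g
  have key : ⁅⁅⁅g, h⁆, h⁆, h⁆ * ⁅⁅⁅g, h⁆, g⁆, h⁆⁻¹ = ⁅⁅⁅g, h⁆, g⁆, g⁆⁻¹ :=
    calc _ = ⁅⁅g ^ 2, h⁆, h⁆ := (commutatorElement_commutatorElement_sq_left hmet g h hh).symm
      _ = ⁅g ^ 2, h⁆ ^ 2 := commutatorElement_commutatorElement_self_of_sq_mem hmet hg hh
      _ = (⁅⁅g, h⁆, g⁆⁻¹) ^ 2 * ⁅g, h⁆ ^ 4 := by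
        rw [commutatorElement_sq_left,
          (hmet _ (inv_mem hghg) _ (pow_mem hgh 2)).mul_pow, ← pow_mul]
      _ = _ := by
        rw [hexp _ hgh, mul_one, inv_pow,
          ← commutatorElement_commutatorElement_self_of_sq_mem hmet hgh hg]
  rw [mul_inv_eq_iff_eq_mul] at key
  rw [key, mul_assoc, (hmet _ (commutatorElement_mem_commutator _ _) _
    (commutatorElement_mem_commutator _ _)).eq, inv_mul_cancel_left]

end Metabelian

section ThreeGenerator

variable {Q : Type*} [Group Q]

theorem sq_mem_commutator_of_sq_mul_inv_mem {g u : Q}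
    (hgu : g ^ 2 * u⁻¹ ∈ (⊤ : Subgroup Q).lowerCentralSeries 2) (hu : u ∈ commutator Q) :
    g ^ 2 ∈ commutator Q := by
  have h := mul_mem (Subgroup.lowerCentralSeries_antitone _ (by norm_num : 1 ≤ 2) hgu) hu
  rwa [inv_mul_cancel_right] at h

theorem commutatorElement_commutatorElement_commutatorElement_swap
    (hmet : ∀ x ∈ commutator Q, ∀ y ∈ commutator Q, Commute x y) (s t k m : Q) :
    ⁅⁅⁅t, s⁆, k⁆, m⁆ = ⁅⁅⁅s, t⁆, k⁆, m⁆⁻¹ := by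
  rw [← commutatorElement_inv s t,
    commutatorElement_inv_left_of_mem_commutator hmet (commutatorElement_mem_commutator _ _),
    commutatorElement_inv_left_of_mem_commutator hmet (commutatorElement_mem_commutator _ _)]

theorem commutatorElement_weight_four_relations
    (hmet : ∀ x ∈ commutator Q, ∀ y ∈ commutator Q, Commute x y)
    (hγ : (⊤ : Subgroup Q).lowerCentralSeries 4 = ⊥)
    {a b c : Q} (ha : a ^ 2 * ⁅a, b⁆⁻¹ ∈ (⊤ : Subgroup Q).lowerCentralSeries 2)
    (hb : b ^ 2 * ⁅b, c⁆⁻¹ ∈ (⊤ : Subgroup Q).lowerCentralSeries 2)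
    (hc : c ^ 2 * ⁅a, c⁆⁻¹ ∈ (⊤ : Subgroup Q).lowerCentralSeries 2) {k : Q}
    (hk : k ^ 2 ∈ commutator Q) :
    (⁅⁅⁅a, b⁆, a⁆, k⁆ = 1 ∧ ⁅⁅⁅a, b⁆, b⁆, k⁆ = ⁅⁅⁅a, b⁆, k⁆, k⁆ ∧
        ⁅⁅⁅a, b⁆, c⁆, k⁆ = ⁅⁅⁅a, c⁆, k⁆, k⁆ * ⁅⁅⁅a, c⁆, k⁆, k⁆) ∧
      (⁅⁅⁅b, c⁆, a⁆, k⁆ = 1 ∧ ⁅⁅⁅b, c⁆, b⁆, k⁆ = 1 ∧ ⁅⁅⁅b, c⁆, c⁆, k⁆ = ⁅⁅⁅b, c⁆, k⁆, k⁆) ∧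
      (⁅⁅⁅a, c⁆, a⁆, k⁆ = ⁅⁅⁅a, c⁆, k⁆, k⁆⁻¹ ∧ ⁅⁅⁅a, c⁆, b⁆, k⁆ = 1 ∧ ⁅⁅⁅a, c⁆, c⁆, k⁆ = 1) := by
  have WA := commutatorElement_commutatorElement_of_sq_mul_inv_mem hmet hγ ha
  have WB := commutatorElement_commutatorElement_of_sq_mul_inv_mem hmet hγ hb
  have WC := commutatorElement_commutatorElement_of_sq_mul_inv_mem hmet hγ hc
  have hswap := commutatorElement_commutatorElement_commutatorElement_swap hmet
  have hPa : ⁅⁅⁅a, b⁆, a⁆, k⁆ = 1 := by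
    simp only [WA a hk, commutatorElement_self, commutatorElement_one_left, inv_one, mul_one]
  have hQb : ⁅⁅⁅b, c⁆, b⁆, k⁆ = 1 := by
    simp only [WB b hk, commutatorElement_self, commutatorElement_one_left, inv_one, mul_one]
  have hRc : ⁅⁅⁅a, c⁆, c⁆, k⁆ = 1 := by
    simp only [WC c hk, commutatorElement_self, commutatorElement_one_left, inv_one, mul_one]
  have hPb : ⁅⁅⁅a, b⁆, b⁆, k⁆ = ⁅⁅⁅a, b⁆, k⁆, k⁆ := by rw [WA b hk, hPa, inv_one, mul_one]
  have hQc : ⁅⁅⁅b, c⁆, c⁆, k⁆ = ⁅⁅⁅b, c⁆, k⁆, k⁆ := by rw [WB c hk, hQb, inv_one, mul_one]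
  have hRa : ⁅⁅⁅a, c⁆, a⁆, k⁆ = ⁅⁅⁅a, c⁆, k⁆, k⁆⁻¹ := by
    rw [WC a hk, hswap a c, hswap a c, hRc, inv_one, inv_one, mul_one]
  refine ⟨⟨hPa, hPb, ?_⟩, ⟨?_, hQb, hQc⟩, ⟨hRa, ?_, hRc⟩⟩
  · rw [WA c hk, hRa, inv_inv]
  · rw [WB a hk, hswap a b, hswap a b, hPb, inv_inv, inv_mul_cancel]
  · rw [WC b hk, hswap b c, hswap b c, hQc, inv_inv, inv_mul_cancel]

theorem commutatorElement_weight_four_diag_eq_one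
    (hmet : ∀ x ∈ commutator Q, ∀ y ∈ commutator Q, Commute x y)
    (hγ : (⊤ : Subgroup Q).lowerCentralSeries 4 = ⊥) (hexp : ∀ x ∈ commutator Q, x ^ 4 = 1)
    {a b c : Q} (ha : a ^ 2 * ⁅a, b⁆⁻¹ ∈ (⊤ : Subgroup Q).lowerCentralSeries 2)
    (hb : b ^ 2 * ⁅b, c⁆⁻¹ ∈ (⊤ : Subgroup Q).lowerCentralSeries 2)
    (hc : c ^ 2 * ⁅a, c⁆⁻¹ ∈ (⊤ : Subgroup Q).lowerCentralSeries 2) {k : Q}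
    (hk : k ∈ ({a, b, c} : Set Q)) :
    ⁅⁅⁅a, b⁆, k⁆, k⁆ = 1 ∧ ⁅⁅⁅b, c⁆, k⁆, k⁆ = 1 ∧ ⁅⁅⁅a, c⁆, k⁆, k⁆ = 1 := by
  have ha2 := sq_mem_commutator_of_sq_mul_inv_mem ha (commutatorElement_mem_commutator a b)
  have hb2 := sq_mem_commutator_of_sq_mul_inv_mem hb (commutatorElement_mem_commutator b c)
  have hc2 := sq_mem_commutator_of_sq_mul_inv_mem hc (commutatorElement_mem_commutator a c)
  obtain ⟨⟨hPaa, -, -⟩, ⟨hQaa, -, -⟩, -⟩ :=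
    commutatorElement_weight_four_relations hmet hγ ha hb hc ha2
  obtain ⟨⟨hPab, -, -⟩, ⟨-, hQbb, -⟩, ⟨-, hRbb, -⟩⟩ :=
    commutatorElement_weight_four_relations hmet hγ ha hb hc hb2
  obtain ⟨⟨-, -, hPcc⟩, ⟨-, hQbc, -⟩, ⟨hRac, -, hRcc⟩⟩ :=
    commutatorElement_weight_four_relations hmet hγ ha hb hc hc2
  have hPbb : ⁅⁅⁅a, b⁆, b⁆, b⁆ = 1 := by
    have h := commutatorElement_weight_four_eq_of_sq_mem hmet hexp ha2 hb2
    rwa [hPaa, hPab, mul_one] at h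
  have hQcc : ⁅⁅⁅b, c⁆, c⁆, c⁆ = 1 := by
    have h := commutatorElement_weight_four_eq_of_sq_mem hmet hexp hb2 hc2
    rwa [hQbb, hQbc, mul_one] at h
  have hRaa : ⁅⁅⁅a, c⁆, a⁆, a⁆ = 1 := by
    have h := commutatorElement_weight_four_eq_of_sq_mem hmet hexp ha2 hc2
    rwa [hRcc, one_mul, hRac, hRcc, inv_one] at h
  rcases hk with h | h | h <;> subst k
  · exact ⟨hPaa, hQaa, hRaa⟩
  · exact ⟨hPbb, hQbb, hRbb⟩
  · exact ⟨by rw [hPcc, hRcc, one_mul], hQcc, hRcc⟩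

theorem commutatorElement_weight_four_eq_one_of_sq_congr
    (hmet : ∀ x ∈ commutator Q, ∀ y ∈ commutator Q, Commute x y)
    (hγ : (⊤ : Subgroup Q).lowerCentralSeries 4 = ⊥) (hexp : ∀ x ∈ commutator Q, x ^ 4 = 1)
    {a b c : Q} (ha : a ^ 2 * ⁅a, b⁆⁻¹ ∈ (⊤ : Subgroup Q).lowerCentralSeries 2)
    (hb : b ^ 2 * ⁅b, c⁆⁻¹ ∈ (⊤ : Subgroup Q).lowerCentralSeries 2)
    (hc : c ^ 2 * ⁅a, c⁆⁻¹ ∈ (⊤ : Subgroup Q).lowerCentralSeries 2) {k m : Q}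
    (hk : k ∈ ({a, b, c} : Set Q)) (hm : m ∈ ({a, b, c} : Set Q)) :
    ⁅⁅⁅a, b⁆, k⁆, m⁆ = 1 ∧ ⁅⁅⁅b, c⁆, k⁆, m⁆ = 1 ∧ ⁅⁅⁅a, c⁆, k⁆, m⁆ = 1 := by
  have hm2 : m ^ 2 ∈ commutator Q := by
    rcases hm with h | h | h <;> subst m
    exacts [sq_mem_commutator_of_sq_mul_inv_mem ha (commutatorElement_mem_commutator a b),
      sq_mem_commutator_of_sq_mul_inv_mem hb (commutatorElement_mem_commutator b c),
      sq_mem_commutator_of_sq_mul_inv_mem hc (commutatorElement_mem_commutator a c)]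
  obtain ⟨⟨hPa, hPb, hPc⟩, ⟨hQa, hQb, hQc⟩, ⟨hRa, hRb, hRc⟩⟩ :=
    commutatorElement_weight_four_relations hmet hγ ha hb hc hm2
  obtain ⟨hPmm, hQmm, hRmm⟩ := commutatorElement_weight_four_diag_eq_one hmet hγ hexp ha hb hc hm
  rcases hk with h | h | h <;> subst k
  · exact ⟨hPa, hQa, by rw [hRa, hRmm, inv_one]⟩
  · exact ⟨hPb.trans hPmm, hQb, hRb⟩
  · exact ⟨by rw [hPc, hRmm, one_mul], hQc.trans hQmm, hRc⟩

theorem top_lowerCentralSeries_three_eq_bot_of_sq_congr {a b c : Q}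
    (hgen : Subgroup.closure {a, b, c} = ⊤) (hγ : (⊤ : Subgroup Q).lowerCentralSeries 4 = ⊥)
    (hmet : ⁅commutator Q, commutator Q⁆ = ⊥) (hexp : ∀ x ∈ commutator Q, x ^ 4 = 1)
    (ha : a ^ 2 * ⁅a, b⁆⁻¹ ∈ (⊤ : Subgroup Q).lowerCentralSeries 2)
    (hb : b ^ 2 * ⁅b, c⁆⁻¹ ∈ (⊤ : Subgroup Q).lowerCentralSeries 2)
    (hc : c ^ 2 * ⁅a, c⁆⁻¹ ∈ (⊤ : Subgroup Q).lowerCentralSeries 2) :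
    (⊤ : Subgroup Q).lowerCentralSeries 3 = ⊥ := by
  have hcomm : ∀ x ∈ commutator Q, ∀ y ∈ commutator Q, Commute x y := fun x hx y hy =>
    commutatorElement_eq_one_iff_commute.mp <| by
      rw [← Subgroup.mem_bot, ← hmet]
      exact Subgroup.commutator_mem_commutator hx hy
  refine Subgroup.top_lowerCentralSeries_eq_bot_of_leftNormedCommutators_subset hgen hγ ?_
  rintro _ ⟨_, ⟨_, ⟨s, hs, t, ht, rfl⟩, k, hk, rfl⟩, m, hm, rfl⟩
  change ⁅⁅⁅s, t⁆, k⁆, m⁆ = 1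
  obtain ⟨hab, hbc, hac⟩ :=
    commutatorElement_weight_four_eq_one_of_sq_congr hcomm hγ hexp ha hb hc hk hm
  have hswap := commutatorElement_commutatorElement_commutatorElement_swap hcomm
  rcases hs with h | h | h <;> rcases ht with h' | h' | h' <;> subst s t <;>
    first
    | rw [commutatorElement_self, commutatorElement_one_left, commutatorElement_one_left]
    | assumption
    | rw [hswap, inv_eq_one]; assumption

end ThreeGenerator

-- In Mathlib's indexing `(⊤ : Subgroup G).lowerCentralSeries n` is `Gₙ₊₁`.
/-- Let `G` be a finite 2-group generated by `a₁, a₂, a₃` with `a₁² ≡ ⁅a₁,a₂⁆`,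
`a₂² ≡ ⁅a₂,a₃⁆`, `a₃² ≡ ⁅a₁,a₃⁆` modulo `G₃`, and suppose `x⁴ ∈ G''` for every `x ∈ G'`.
Then `G'' = G₄`, the fourth term of the lower central series (in Mathlib's indexing
`G₄ = lowerCentralSeries G 3`). -/
theorem stmt_6 (G : Type*) [Group G] [Finite G] (hG : IsPGroup 2 G)
    (a₁ a₂ a₃ : G) (hgen : Subgroup.closure {a₁, a₂, a₃} = ⊤)
    (h1 : a₁ ^ 2 * ⁅a₁, a₂⁆⁻¹ ∈ (⊤ : Subgroup G).lowerCentralSeries 2)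
    (h2 : a₂ ^ 2 * ⁅a₂, a₃⁆⁻¹ ∈ (⊤ : Subgroup G).lowerCentralSeries 2)
    (h3 : a₃ ^ 2 * ⁅a₁, a₃⁆⁻¹ ∈ (⊤ : Subgroup G).lowerCentralSeries 2)
    (h8 : ∀ x ∈ commutator G, x ^ 4 ∈ ⁅commutator G, commutator G⁆) :
    ⁅commutator G, commutator G⁆ = (⊤ : Subgroup G).lowerCentralSeries 3 := by
  have : Fact (Nat.Prime 2) := ⟨Nat.prime_two⟩
  have := hG.isNilpotent
  refine le_antisymm commutator_commutator_le_top_lowerCentralSeries_three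
    (Subgroup.top_lowerCentralSeries_le_of_le_sup_succ _ ?_)
  set N := ⁅commutator G, commutator G⁆ ⊔ (⊤ : Subgroup G).lowerCentralSeries 4
  have hπ : Function.Surjective (QuotientGroup.mk' N) := QuotientGroup.mk'_surjective N
  have hmem {n : ℕ} {x : G} (hx : x ∈ (⊤ : Subgroup G).lowerCentralSeries n) :
      QuotientGroup.mk' N x ∈ (⊤ : Subgroup (G ⧸ N)).lowerCentralSeries n :=
    Subgroup.map_top_lowerCentralSeries_of_surjective hπ n ▸ Subgroup.mem_map_of_mem _ hx
  rw [← QuotientGroup.top_lowerCentralSeries_eq_bot_iff]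
  refine top_lowerCentralSeries_three_eq_bot_of_sq_congr (a := QuotientGroup.mk' N a₁)
    (b := QuotientGroup.mk' N a₂) (c := QuotientGroup.mk' N a₃) ?_
    ((QuotientGroup.top_lowerCentralSeries_eq_bot_iff N 4).mpr le_sup_right)
    ((QuotientGroup.commutator_commutator_eq_bot_iff N).mpr le_sup_left) ?_
    (by simpa only [map_mul, map_pow, map_inv, map_commutatorElement] using hmem h1)
    (by simpa only [map_mul, map_pow, map_inv, map_commutatorElement] using hmem h2)
    (by simpa only [map_mul, map_pow, map_inv, map_commutatorElement] using hmem h3)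
  · rw [← Set.image_singleton, ← Set.image_insert_eq, ← Set.image_insert_eq,
      ← MonoidHom.map_closure, hgen, Subgroup.map_top_of_surjective _ hπ]
  · intro x hx
    obtain ⟨y, hy, rfl⟩ := (Subgroup.map_top_lowerCentralSeries_of_surjective hπ 1).ge hx
    rw [← map_pow, QuotientGroup.mk'_apply, QuotientGroup.eq_one_iff]
    exact Subgroup.mem_sup_left (h8 y hy)
end

section
/- Let p be a prime with p ≡ 3 (mod 4), and let ε > 1 be the fundamental unit of the real quadratic field ℚ(√p) ⊆ ℝ. Then there exist odd integers a, b such that 2ε = a²p + b² + 2ab√p (equivalently, √ε = (a√(2p) + b√2)/2), and moreover (a²p − b²)/2 = 1 if p ≡ 3 (mod 8) and (a²p − b²)/2 = −1 if p ≡ 7 (mod 8). -/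
/-!
As `p ≡ 3 (mod 4)`, the algebraic integers of `ℚ(√p)` are the `t + u√p` with `t, u ∈ ℤ`, and no
unit has norm `-1` since `t² - p u² ≡ t² + u² (mod 4)`. So `ε = t + u√p` with `t > 0` and
`(t - 1)(t + 1) = p u²`. If `t = 2m + 1` were odd, then `u = 2v` and `m (m + 1) = p v²` splits
into coprime factors `p a²` and `b²`, making `b + a√p` a unit whose square is `ε`, against
fundamentality. So `t` is even, the coprime odd factors `t ∓ 1` are `p a²` and `b²` with `u = ab`,
whence `2ε = p a² + b² + 2ab√p` and `a² p - b² = ±2`; odd squares being `1 (mod 8)`, the sign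
is read off from `a² p - b² ≡ p - 1 (mod 8)`.
-/

/-- `x` belongs to the real quadratic field `ℚ(√d) ⊆ ℝ`. -/
def memQuadField (d x : ℝ) : Prop := ∃ u v : ℚ, x = u + v * Real.sqrt d

/-- `x` is a unit of the ring of integers `𝓞` of `ℚ(√d) ⊆ ℝ`: it lies in `ℚ(√d)`, is a
nonzero algebraic integer, and its inverse is also an algebraic integer. -/
def isQuadUnit (d x : ℝ) : Prop :=
  memQuadField d x ∧ IsIntegral ℤ x ∧ x ≠ 0 ∧ IsIntegral ℤ x⁻¹

/-- `ε` is a fundamental unit of `ℚ(√d) ⊆ ℝ`: it is a unit of the ring of integers and every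
unit of the ring of integers equals `±εⁿ` for some integer `n`. -/
def isFundUnit (d ε : ℝ) : Prop :=
  isQuadUnit d ε ∧ ∀ x : ℝ, isQuadUnit d x → ∃ n : ℤ, x = ε ^ n ∨ x = -ε ^ n

open Polynomial

theorem Int.sq_emod_four (x : ℤ) : x ^ 2 % 4 = x % 2 := by
  rcases Int.even_or_odd' x with ⟨k, rfl | rfl⟩ <;> ring_nf <;> omega

theorem Int.sq_sub_mul_sq_emod_four {d : ℤ} (hd : d % 4 = 3) (s m : ℤ) :
    (s ^ 2 - d * m ^ 2) % 4 = (s % 2 + m % 2) % 4 := by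
  have hdm : d * m ^ 2 % 4 = 3 * (m % 2) % 4 := by rw [Int.mul_emod, hd, Int.sq_emod_four]
  have hs := Int.sq_emod_four s
  generalize s ^ 2 = S, d * m ^ 2 = M at *
  omega

theorem Int.sq_emod_eight_of_odd {a : ℤ} (ha : Odd a) : a ^ 2 % 8 = 1 := by
  obtain ⟨k, rfl⟩ := ha
  obtain ⟨j, hj⟩ := Int.even_mul_succ_self k
  have : (2 * k + 1) ^ 2 = 4 * (k * (k + 1)) + 1 := by ring
  omega

theorem Int.sq_mul_sub_sq_emod_eight {a b : ℤ} (ha : Odd a) (hb : Odd b) (p : ℤ) :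
    (a ^ 2 * p - b ^ 2) % 8 = (p - 1) % 8 := by
  rw [Int.sub_emod, Int.mul_emod, Int.sq_emod_eight_of_odd ha, Int.sq_emod_eight_of_odd hb]
  omega

theorem Int.exists_sq_of_isCoprime_of_mul_eq_sq {k w v : ℤ} (hkw : IsCoprime k w) (hk : 0 ≤ k)
    (hw : 0 ≤ w) (h : k * w = v ^ 2) : ∃ a b : ℤ, k = a ^ 2 ∧ w = b ^ 2 ∧ v = a * b := by
  obtain ⟨a, ha⟩ := Int.sq_of_isCoprime hkw h
  obtain ⟨b, hb⟩ := Int.sq_of_isCoprime hkw.symm (by rw [mul_comm, h])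
  replace ha : k = a ^ 2 := ha.elim id fun ha => by nlinarith [sq_nonneg a]
  replace hb : w = b ^ 2 := hb.elim id fun hb => by nlinarith [sq_nonneg b]
  have hv : (v - a * b) * (v + a * b) = 0 := by linear_combination -h + w * ha + a ^ 2 * hb
  rcases mul_eq_zero.mp hv with hv | hv
  · exact ⟨a, b, ha, hb, by linarith⟩
  · exact ⟨-a, b, by rw [ha, neg_sq], hb, by linarith⟩

theorem Int.exists_sq_of_isCoprime_of_mul_eq_prime_mul_sq {p : ℕ} (hp : p.Prime) {k w v : ℤ}
    (hkw : IsCoprime k w) (hk : 0 ≤ k) (hw : 0 ≤ w) (h : k * w = p * v ^ 2) :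
    ∃ a b : ℤ, v = a * b ∧ (k = p * a ^ 2 ∧ w = b ^ 2 ∨ k = b ^ 2 ∧ w = p * a ^ 2) := by
  wlog hpk : (p : ℤ) ∣ k generalizing k w
  · have hpw : (p : ℤ) ∣ w :=
      ((Nat.prime_iff_prime_int.mp hp).dvd_or_dvd ⟨_, h⟩).resolve_left hpk
    obtain ⟨a, b, hv, hab⟩ := this hkw.symm hw hk (by rw [mul_comm, h]) hpw
    exact ⟨a, b, hv, hab.symm.imp And.symm And.symm⟩
  obtain ⟨k', rfl⟩ := hpk
  have hp0 : (0 : ℤ) < p := by exact_mod_cast hp.pos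
  obtain ⟨a, b, rfl, rfl, hv⟩ := Int.exists_sq_of_isCoprime_of_mul_eq_sq
    (hkw.of_isCoprime_of_dvd_left (dvd_mul_left k' p)) (nonneg_of_mul_nonneg_right hk hp0) hw
    (mul_left_cancel₀ hp0.ne' (by rw [← h]; ring))
  exact ⟨a, b, hv, .inl ⟨rfl, rfl⟩⟩

theorem Rat.exists_eq_intCast_of_mul_sq_eq {d : ℕ} (hd : Squarefree d) {z : ℚ} {k : ℤ}
    (h : d * z ^ 2 = k) : ∃ m : ℤ, z = m := by
  have hint : (d : ℤ) * z.num ^ 2 = z.den ^ 2 * k := by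
    rw [← Rat.num_div_den z] at h
    field_simp at h
    exact_mod_cast h
  have hdvd : z.den ^ 2 ∣ d * z.num.natAbs ^ 2 := by
    have := Int.natAbs_dvd_natAbs.mpr (Dvd.intro _ hint.symm)
    simpa [Int.natAbs_mul, Int.natAbs_pow] using this
  have hden : z.den * z.den ∣ d := by
    rw [← sq]; exact (Nat.Coprime.pow 2 2 z.reduced.symm).dvd_of_dvd_mul_right hdvd
  exact ⟨z.num, ((Rat.den_eq_one_iff z).mp (Nat.isUnit_iff.mp (hd _ hden))).symm⟩

theorem irrational_sqrt_of_squarefree {d : ℕ} (hd : Squarefree d) (hd1 : d ≠ 1) :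
    Irrational √d := by
  rw [irrational_sqrt_natCast_iff]
  rintro ⟨a, rfl⟩
  exact hd1 (by rw [Nat.isUnit_iff.mp (hd a dvd_rfl), mul_one])

theorem minpoly_ratCast_add_ratCast_mul_sqrt {d : ℕ} (hd : Irrational √d) {q r : ℚ} (hr : r ≠ 0) :
    minpoly ℚ ((q : ℝ) + r * √d) = X ^ 2 - C (2 * q) * X + C (q ^ 2 - d * r ^ 2) := by
  have hmonic : (X ^ 2 - C (2 * q) * X + C (q ^ 2 - d * r ^ 2)).Monic := by monicity!
  have hdeg : (X ^ 2 - C (2 * q) * X + C (q ^ 2 - d * r ^ 2)).natDegree = 2 := by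
    compute_degree!
  set f : ℚ[X] := X ^ 2 - C (2 * q) * X + C (q ^ 2 - d * r ^ 2)
  have hroot : aeval ((q : ℝ) + r * √d) f = 0 := by
    simp only [f, map_add, map_sub, map_mul, map_pow, aeval_X, aeval_C, eq_ratCast]
    push_cast
    linear_combination (r : ℝ) ^ 2 * Real.sq_sqrt (Nat.cast_nonneg d)
  have hint : IsIntegral ℚ ((q : ℝ) + r * √d) := ⟨f, hmonic, hroot⟩
  refine (eq_of_monic_of_dvd_of_natDegree_le (minpoly.monic hint) hmonic
    (minpoly.dvd ℚ _ hroot) ?_).symm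
  rw [hdeg, minpoly.two_le_natDegree_iff hint]
  rintro ⟨y, hy⟩
  exact ((hd.ratCast_mul hr).ratCast_add q) ⟨y, hy⟩

theorem exists_trace_norm_eq_intCast_of_isIntegral {d : ℕ} (hd : Irrational √d)
    {q r : ℚ} (h : IsIntegral ℤ ((q : ℝ) + r * √d)) :
    ∃ s N : ℤ, 2 * q = s ∧ q ^ 2 - d * r ^ 2 = N := by
  rcases eq_or_ne r 0 with rfl | hr
  · have hq : IsIntegral ℤ q := by
      rw [← isIntegral_algebraMap_iff (algebraMap ℚ ℝ).injective]
      simpa using h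
    obtain ⟨t, rfl⟩ := IsIntegrallyClosed.isIntegral_iff.mp hq
    exact ⟨2 * t, t ^ 2, by simp, by simp⟩
  · have hcoeff (i : ℕ) : ((minpoly ℤ ((q : ℝ) + r * √d)).coeff i : ℚ) =
        (X ^ 2 - C (2 * q) * X + C (q ^ 2 - d * r ^ 2)).coeff i := by
      rw [← minpoly_ratCast_add_ratCast_mul_sqrt hd hr,
        minpoly.isIntegrallyClosed_eq_field_fractions' ℚ h, coeff_map, eq_intCast]
    refine ⟨-(minpoly ℤ ((q : ℝ) + r * √d)).coeff 1, (minpoly ℤ ((q : ℝ) + r * √d)).coeff 0,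
      ?_, ?_⟩
    · rw [Int.cast_neg, hcoeff]
      simp only [coeff_add, coeff_sub, coeff_C_mul, coeff_X_pow, coeff_X, coeff_C]
      norm_num
    · rw [hcoeff]
      simp only [coeff_add, coeff_sub, coeff_C_mul, coeff_X_pow, coeff_X, coeff_C]
      norm_num

theorem exists_coords_eq_intCast_of_isIntegral {d : ℕ} (hd : Squarefree d) (hd4 : d % 4 = 3)
    {q r : ℚ} (h : IsIntegral ℤ ((q : ℝ) + r * √d)) : ∃ t u : ℤ, q = t ∧ r = u := by
  obtain ⟨s, N, hs, hN⟩ := exists_trace_norm_eq_intCast_of_isIntegral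
    (irrational_sqrt_of_squarefree hd (by omega)) h
  obtain ⟨m, hm⟩ := Rat.exists_eq_intCast_of_mul_sq_eq hd (z := 2 * r) (k := s ^ 2 - 4 * N)
    (by push_cast; rw [← hs, ← hN]; ring)
  have hsm : s ^ 2 - (d : ℤ) * m ^ 2 = 4 * N := by
    have : ((s ^ 2 - d * m ^ 2 : ℤ) : ℚ) = (4 * N : ℤ) := by
      push_cast; rw [← hs, ← hm, ← hN]; ring
    exact_mod_cast this
  have := Int.sq_sub_mul_sq_emod_four (d := d) (by omega) s m
  obtain ⟨t, rfl⟩ : 2 ∣ s := by omega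
  obtain ⟨u, rfl⟩ : 2 ∣ m := by omega
  exact ⟨t, u, by push_cast at hs; linarith, by push_cast at hm; linarith⟩

theorem isIntegral_intCast_add_intCast_mul_sqrt (d : ℕ) (t u : ℤ) :
    IsIntegral ℤ ((t : ℝ) + u * √d) := by
  have hsqrt : IsIntegral ℤ √(d : ℝ) := .of_pow two_pos <| by
    rw [Real.sq_sqrt (Nat.cast_nonneg d)]; exact isIntegral_algebraMap (x := (d : ℤ))
  exact (isIntegral_algebraMap (x := t)).add ((isIntegral_algebraMap (x := u)).mul hsqrt)

theorem isQuadUnit_of_isUnit_norm {d : ℕ} {t u : ℤ} (h : IsUnit (t ^ 2 - d * u ^ 2)) :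
    isQuadUnit d (t + u * √d) := by
  set N := t ^ 2 - d * u ^ 2 with hN
  have hN2 : ((N * N : ℤ) : ℝ) = 1 := by
    rcases Int.isUnit_iff.mp h with h | h <;> simp [h]
  have hinv : ((t : ℝ) + u * √d) * ((N * t : ℤ) + (-(N * u) : ℤ) * √d) = 1 := by
    have hNr : (N : ℝ) = t ^ 2 - d * u ^ 2 := by rw [hN]; push_cast; ring
    push_cast at hN2 ⊢
    linear_combination -(N : ℝ) * hNr + hN2 - (N : ℝ) * u ^ 2 * Real.sq_sqrt (Nat.cast_nonneg d)
  refine ⟨⟨t, u, by push_cast; ring⟩, isIntegral_intCast_add_intCast_mul_sqrt d t u,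
    left_ne_zero_of_mul_eq_one hinv, ?_⟩
  rw [inv_eq_of_mul_eq_one_right hinv]
  exact isIntegral_intCast_add_intCast_mul_sqrt d _ _

theorem exists_isUnit_norm_of_isQuadUnit {d : ℕ} (hd : Squarefree d) (hd4 : d % 4 = 3) {x : ℝ}
    (hx : isQuadUnit d x) : ∃ t u : ℤ, x = t + u * √d ∧ IsUnit (t ^ 2 - d * u ^ 2) := by
  obtain ⟨⟨q, r, rfl⟩, hint, hne, hinv⟩ := hx
  obtain ⟨t, u, rfl, rfl⟩ := exists_coords_eq_intCast_of_isIntegral hd hd4 hint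
  push_cast at hne hinv ⊢
  refine ⟨t, u, rfl, ?_⟩
  set N := t ^ 2 - d * u ^ 2 with hN
  have hconj : ((t : ℝ) + u * √d) * (t - u * √d) = N := by
    rw [hN]; push_cast
    linear_combination -(u : ℝ) ^ 2 * Real.sq_sqrt (Nat.cast_nonneg d)
  have hN0 : N ≠ 0 := by
    rintro hN0
    rw [hN0, Int.cast_zero, mul_eq_zero, or_iff_right hne, sub_eq_zero] at hconj
    obtain rfl | hu := eq_or_ne u 0
    · simp_all
    · exact ((irrational_sqrt_of_squarefree hd (by omega)).intCast_mul hu).ne_int t hconj.symm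
  have hinv_eq : ((t : ℝ) + u * √d)⁻¹ = ((t / N : ℚ) : ℝ) + ((-u / N : ℚ) : ℝ) * √d := by
    refine inv_eq_of_mul_eq_one_right ?_
    rw [show ((t / N : ℚ) : ℝ) + ((-u / N : ℚ) : ℝ) * √d = (t - u * √d) / N by push_cast; ring,
      mul_div_assoc', hconj, div_self (by exact_mod_cast hN0)]
  rw [hinv_eq] at hinv
  obtain ⟨t', u', ht', hu'⟩ := exists_coords_eq_intCast_of_isIntegral hd hd4 hinv
  -- `t' ^ 2 - d * u' ^ 2` is the norm `N⁻¹` of `x⁻¹`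
  have hunit : N * (t' ^ 2 - d * u' ^ 2) = 1 := by
    have : (N : ℚ) * ((t / N) ^ 2 - d * (-u / N) ^ 2) = 1 := by
      have hN0' : (N : ℚ) ≠ 0 := by exact_mod_cast hN0
      field_simp
      exact_mod_cast hN.symm
    rw [ht', hu'] at this
    exact_mod_cast this
  exact .of_mul_eq_one _ hunit

theorem exists_norm_eq_one_of_isQuadUnit {d : ℕ} (hd : Squarefree d) (hd4 : d % 4 = 3) {x : ℝ}
    (hx : isQuadUnit d x) : ∃ t u : ℤ, x = t + u * √d ∧ t ^ 2 - d * u ^ 2 = 1 := by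
  obtain ⟨t, u, rfl, hunit⟩ := exists_isUnit_norm_of_isQuadUnit hd hd4 hx
  refine ⟨t, u, rfl, (Int.isUnit_iff.mp hunit).resolve_right fun h => ?_⟩
  have := Int.sq_sub_mul_sq_emod_four (d := d) (by omega) t u
  omega

theorem isFundUnit.sq_ne {d ε η : ℝ} (hfund : isFundUnit d ε) (hε : 1 < ε)
    (hη : isQuadUnit d η) : η ^ 2 ≠ ε := by
  intro hsq
  obtain ⟨n, rfl | rfl⟩ := hfund.2 η hη <;>
  · have h : ε ^ (n * 2) = ε ^ (1 : ℤ) := by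
      rw [zpow_mul, zpow_one, zpow_two, ← sq]; simpa using hsq
    have := zpow_right_injective₀ (by positivity) hε.ne' h
    omega

theorem pos_of_sq_sub_mul_sq_eq_one {d : ℕ} {t u : ℤ} (h : 0 < (t : ℝ) + u * √d)
    (hnorm : t ^ 2 - d * u ^ 2 = 1) : 0 < t := by
  have hconj : ((t : ℝ) + u * √d) * (t - u * √d) = 1 := by
    have := congrArg (Int.cast (R := ℝ)) hnorm
    push_cast at this
    linear_combination this - (u : ℝ) ^ 2 * Real.sq_sqrt (Nat.cast_nonneg d)
  have := pos_of_mul_pos_right (hconj ▸ one_pos) h.le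
  exact_mod_cast (by linarith : (0 : ℝ) < t)

theorem exists_odd_of_sq_sub_prime_mul_sq_eq_one_of_even {p : ℕ} (hp : p.Prime) {t u : ℤ}
    (ht : 0 < t) (heven : Even t) (h : t ^ 2 - p * u ^ 2 = 1) :
    ∃ a b : ℤ, Odd a ∧ Odd b ∧ p * a ^ 2 + b ^ 2 = 2 * t ∧ u = a * b ∧
      (a ^ 2 * p - b ^ 2 = 2 ∨ a ^ 2 * p - b ^ 2 = -2) := by
  obtain ⟨m, rfl⟩ := heven
  obtain ⟨a, b, rfl, hab⟩ := Int.exists_sq_of_isCoprime_of_mul_eq_prime_mul_sq hp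
    (k := m + m - 1) (w := m + m + 1) (v := u) ⟨m, -(m - 1), by ring⟩ (by omega) (by omega)
    (by linear_combination h)
  have hodd : Odd ((p : ℤ) * a ^ 2) ∧ Odd (b ^ 2) := by
    have hodd₁ : Odd (m + m - 1) := ⟨m - 1, by ring⟩
    have hodd₂ : Odd (m + m + 1) := ⟨m, by ring⟩
    rcases hab with ⟨h1, h2⟩ | ⟨h1, h2⟩
    exacts [⟨h1 ▸ hodd₁, h2 ▸ hodd₂⟩, ⟨h2 ▸ hodd₂, h1 ▸ hodd₁⟩]
  refine ⟨a, b, (Int.odd_pow' two_ne_zero).mp (Int.odd_mul.mp hodd.1).2,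
    (Int.odd_pow' two_ne_zero).mp hodd.2, ?_, rfl, ?_⟩
  · rcases hab with ⟨h1, h2⟩ | ⟨h1, h2⟩ <;> linarith
  · rcases hab with ⟨h1, h2⟩ | ⟨h1, h2⟩
    · right; linarith
    · left; linarith

theorem exists_sq_eq_of_sq_sub_prime_mul_sq_eq_one_of_odd {p : ℕ} (hp : p.Prime) (hp2 : Odd p)
    {t u : ℤ} (ht : 0 < t) (hodd : Odd t) (h : t ^ 2 - p * u ^ 2 = 1) :
    ∃ a b : ℤ, b ^ 2 + p * a ^ 2 = t ∧ u = 2 * a * b ∧ IsUnit (b ^ 2 - p * a ^ 2) := by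
  obtain ⟨v, rfl⟩ : Even u := by
    by_contra hu
    have : Even (t ^ 2 - p * u ^ 2) :=
      hodd.pow.sub_odd ((Int.odd_coe_nat p).mpr hp2 |>.mul (Int.not_even_iff_odd.mp hu).pow)
    exact Int.not_even_one (h ▸ this)
  obtain ⟨m, rfl⟩ := hodd
  obtain ⟨a, b, rfl, hab⟩ := Int.exists_sq_of_isCoprime_of_mul_eq_prime_mul_sq hp
    (k := m) (w := m + 1) (v := v) ⟨-1, 1, by ring⟩ (by omega) (by omega)
    (mul_left_cancel₀ four_ne_zero (by linear_combination h))
  refine ⟨a, b, ?_, by ring, ?_⟩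
  · rcases hab with ⟨h1, h2⟩ | ⟨h1, h2⟩ <;> linarith
  · rcases hab with ⟨h1, h2⟩ | ⟨h1, h2⟩ <;> rw [← h1, ← h2] <;> simp

/-- **Lemma 6 (iii).** Let `p` be a prime `≡ 3 (mod 4)` and `ε > 1` the fundamental unit of
`ℚ(√p)`. Then `√ε = (a√(2p) + b√2)/2` for some odd integers `a, b`, i.e.
`2ε = a²p + b² + 2ab√p`, and `(a²p − b²)/2 = 1` if `p ≡ 3 (mod 8)` while
`(a²p − b²)/2 = −1` if `p ≡ 7 (mod 8)`. -/
theorem stmt_9 (p : ℕ) (hp : p.Prime) (hp4 : p % 4 = 3)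
    (ε : ℝ) (hε : 1 < ε) (hfund : isFundUnit (p : ℝ) ε) :
    ∃ a b : ℤ, Odd a ∧ Odd b ∧
      2 * ε = (a : ℝ) ^ 2 * p + (b : ℝ) ^ 2 + 2 * a * b * Real.sqrt (p : ℝ) ∧
      (p % 8 = 3 → a ^ 2 * (p : ℤ) - b ^ 2 = 2) ∧
      (p % 8 = 7 → a ^ 2 * (p : ℤ) - b ^ 2 = -2) := by
  obtain ⟨t, u, rfl, hnorm⟩ := exists_norm_eq_one_of_isQuadUnit hp.prime.squarefree hp4 hfund.1
  have ht : 0 < t := pos_of_sq_sub_mul_sq_eq_one (by linarith) hnorm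
  rcases Int.even_or_odd t with heven | hodd
  · obtain ⟨a, b, ha, hb, hsum, rfl, hdiff⟩ :=
      exists_odd_of_sq_sub_prime_mul_sq_eq_one_of_even hp ht heven hnorm
    have hmod8 := Int.sq_mul_sub_sq_emod_eight ha hb p
    refine ⟨a, b, ha, hb, ?_, fun _ => by omega, fun _ => by omega⟩
    have := congrArg (Int.cast (R := ℝ)) hsum
    push_cast at this ⊢
    linear_combination -this
  · obtain ⟨a, b, hsum, rfl, hunit⟩ := exists_sq_eq_of_sq_sub_prime_mul_sq_eq_one_of_odd hp
      (Nat.odd_iff.mpr (by omega)) ht hodd hnorm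
    refine absurd ?_ (hfund.sq_ne hε (isQuadUnit_of_isUnit_norm hunit))
    have := congrArg (Int.cast (R := ℝ)) hsum
    push_cast at this ⊢
    linear_combination this + (a : ℝ) ^ 2 * Real.sq_sqrt (Nat.cast_nonneg p)
end
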